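/- arXiv:2404.19177 — 3 statements merged into one kernel-verified Lean document; each statement's English description precedes it below -/
import Mathlib

section
/- Every derivation of the Lie algebra h10 = (0,0,0,12,13,14) is lower triangular with respect to the standard basis; consequently Der(h10) is solvable. -/
open Submodule

abbrev V6 : Type := Fin 6 → ℝ

def e (i : Fin 6) : V6 := Pi.single i 1

/-- Bracket of h10 = (0,0,0,12,13,14): [e1,e2]=e4, [e1,e3]=e5, [e1,e4]=e6. -/
def br (x y : V6) : V6 :=
  ![0, 0, 0, x 0 * y 1 - x 1 * y 0, x 0 * y 2 - x 2 * y 0, x 0 * y 3 - x 3 * y 0]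

/-- `D` is a derivation of the Lie algebra. -/
def IsDeriv (D : V6 →ₗ[ℝ] V6) : Prop :=
  ∀ x y, D (br x y) = br (D x) y + br x (D y)

/-- Derived series (in set form) of the derivation algebra inside `End`. -/
def ds : ℕ → Set (V6 →ₗ[ℝ] V6)
  | 0 => {D | IsDeriv D}
  | k + 1 => {E | ∃ A ∈ ds k, ∃ B ∈ ds k, E = A ∘ₗ B - B ∘ₗ A}

/-! ### Auxiliary lemmas -/

lemma e_ap (i j : Fin 6) : e i j = if j = i then 1 else 0 := Pi.single_apply i 1 j

lemma br_a0 (x y : V6) : br x y 0 = 0 := rfl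
lemma br_a1 (x y : V6) : br x y 1 = 0 := rfl
lemma br_a2 (x y : V6) : br x y 2 = 0 := rfl
lemma br_a3 (x y : V6) : br x y 3 = x 0 * y 1 - x 1 * y 0 := rfl
lemma br_a4 (x y : V6) : br x y 4 = x 0 * y 2 - x 2 * y 0 := rfl
lemma br_a5 (x y : V6) : br x y 5 = x 0 * y 3 - x 3 * y 0 := rfl

lemma hbr01 : br (e 0) (e 1) = e 3 := by
  funext i; fin_cases i <;> simp [br_a0, br_a1, br_a2, br_a3, br_a4, br_a5, e_ap]
lemma hbr02 : br (e 0) (e 2) = e 4 := by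
  funext i; fin_cases i <;> simp [br_a0, br_a1, br_a2, br_a3, br_a4, br_a5, e_ap]
lemma hbr03 : br (e 0) (e 3) = e 5 := by
  funext i; fin_cases i <;> simp [br_a0, br_a1, br_a2, br_a3, br_a4, br_a5, e_ap]
lemma hbr04 : br (e 0) (e 4) = 0 := by
  funext i; fin_cases i <;> simp [br_a0, br_a1, br_a2, br_a3, br_a4, br_a5, e_ap]
lemma hbr05 : br (e 0) (e 5) = 0 := by
  funext i; fin_cases i <;> simp [br_a0, br_a1, br_a2, br_a3, br_a4, br_a5, e_ap]
lemma hbr12 : br (e 1) (e 2) = 0 := by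
  funext i; fin_cases i <;> simp [br_a0, br_a1, br_a2, br_a3, br_a4, br_a5, e_ap]

lemma pi_sum (v : V6) : v = ∑ k : Fin 6, v k • e k := by
  funext j
  simp [Fintype.sum_apply, e_ap, mul_ite]

lemma apply_eq_sum (D : V6 →ₗ[ℝ] V6) (v : V6) (i : Fin 6) :
    D v i = ∑ k : Fin 6, v k * D (e k) i := by
  conv_lhs => rw [pi_sum v]
  simp [map_sum, Finset.sum_apply]

/-- Every derivation is lower triangular. -/
lemma deriv_lower {D : V6 →ₗ[ℝ] V6} (hD : IsDeriv D) (i j : Fin 6)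
    (hij : (i : ℕ) < (j : ℕ)) : D (e j) i = 0 := by
  have h01 := hD (e 0) (e 1); rw [hbr01] at h01
  have h02 := hD (e 0) (e 2); rw [hbr02] at h02
  have h03 := hD (e 0) (e 3); rw [hbr03] at h03
  have h04 := hD (e 0) (e 4); rw [hbr04, map_zero] at h04
  have h05 := hD (e 0) (e 5); rw [hbr05, map_zero] at h05
  have h12 := hD (e 1) (e 2); rw [hbr12, map_zero] at h12
  -- column 3 (and entries of columns 4,5 expressed through them)
  have d03 : D (e 3) 0 = 0 := by
    have h := congrFun h01 0; rw [Pi.add_apply, br_a0, br_a0] at h; linarith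
  have d13 : D (e 3) 1 = 0 := by
    have h := congrFun h01 1; rw [Pi.add_apply, br_a1, br_a1] at h; linarith
  have d23 : D (e 3) 2 = 0 := by
    have h := congrFun h01 2; rw [Pi.add_apply, br_a2, br_a2] at h; linarith
  have d04 : D (e 4) 0 = 0 := by
    have h := congrFun h02 0; rw [Pi.add_apply, br_a0, br_a0] at h; linarith
  have d14 : D (e 4) 1 = 0 := by
    have h := congrFun h02 1; rw [Pi.add_apply, br_a1, br_a1] at h; linarith
  have d24 : D (e 4) 2 = 0 := by
    have h := congrFun h02 2; rw [Pi.add_apply, br_a2, br_a2] at h; linarith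
  have d05 : D (e 5) 0 = 0 := by
    have h := congrFun h03 0; rw [Pi.add_apply, br_a0, br_a0] at h; linarith
  have d15 : D (e 5) 1 = 0 := by
    have h := congrFun h03 1; rw [Pi.add_apply, br_a1, br_a1] at h; linarith
  have d25 : D (e 5) 2 = 0 := by
    have h := congrFun h03 2; rw [Pi.add_apply, br_a2, br_a2] at h; linarith
  -- columns 1 and 2, first row
  have d01 : D (e 1) 0 = 0 := by
    have h := congrFun h12 4
    rw [Pi.zero_apply, Pi.add_apply, br_a4, br_a4] at h
    simp [e_ap] at h; linarith
  have d02 : D (e 2) 0 = 0 := by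
    have h := congrFun h12 3
    rw [Pi.zero_apply, Pi.add_apply, br_a3, br_a3] at h
    simp [e_ap] at h; linarith
  -- remaining entries
  have d34 : D (e 4) 3 = 0 := by
    have h := congrFun h04 5
    rw [Pi.zero_apply, Pi.add_apply, br_a5, br_a5] at h
    simp [e_ap] at h; linarith
  have d35 : D (e 5) 3 = 0 := by
    have h := congrFun h05 5
    rw [Pi.zero_apply, Pi.add_apply, br_a5, br_a5] at h
    simp [e_ap] at h; linarith
  have d12 : D (e 2) 1 = 0 := by
    have h := congrFun h02 3
    rw [Pi.add_apply, br_a3, br_a3] at h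
    simp [e_ap] at h; linarith
  have d45 : D (e 5) 4 = 0 := by
    have h := congrFun h03 4
    rw [Pi.add_apply, br_a4, br_a4] at h
    simp [e_ap] at h; linarith
  fin_cases i <;> fin_cases j <;>
    first
      | exact absurd hij (by decide)
      | exact d01 | exact d02 | exact d03 | exact d04 | exact d05
      | exact d12 | exact d13 | exact d14 | exact d15
      | exact d23 | exact d24 | exact d25
      | exact d34 | exact d35
      | exact d45

/-- `D` vanishes at entries `(i,j)` with `i < j + m`. -/
def Low (m : ℕ) (D : V6 →ₗ[ℝ] V6) : Prop :=
  ∀ i j : Fin 6, (i : ℕ) < (j : ℕ) + m → D (e j) i = 0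

lemma low_comp {a b : ℕ} {A B : V6 →ₗ[ℝ] V6} (hA : Low a A) (hB : Low b B) :
    Low (a + b) (A ∘ₗ B) := by
  intro i j hij
  rw [LinearMap.comp_apply, apply_eq_sum]
  refine Finset.sum_eq_zero fun k _ => ?_
  by_cases hk : (k : ℕ) < (j : ℕ) + b
  · rw [hB k j hk, zero_mul]
  · rw [hA i k (by omega), mul_zero]

lemma low_sub {m : ℕ} {A B : V6 →ₗ[ℝ] V6} (hA : Low m A) (hB : Low m B) :
    Low m (A - B) := by
  intro i j h
  rw [LinearMap.sub_apply, Pi.sub_apply, hA i j h, hB i j h, sub_zero]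

lemma diag_comp {A B : V6 →ₗ[ℝ] V6} (hA : Low 0 A) (hB : Low 0 B) (j : Fin 6) :
    (A ∘ₗ B) (e j) j = A (e j) j * B (e j) j := by
  rw [LinearMap.comp_apply, apply_eq_sum, Finset.sum_eq_single j]
  · rw [mul_comm]
  · intro k _ hk
    have hne : (k : ℕ) ≠ (j : ℕ) := fun h' => hk (Fin.ext h')
    rcases Nat.lt_or_ge (k : ℕ) (j : ℕ) with h | h
    · rw [hB k j (by omega), zero_mul]
    · rw [hA j k (by omega), mul_zero]
  · intro h; exact absurd (Finset.mem_univ j) h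

lemma ds1_low : ∀ E ∈ ds 1, Low 1 E := by
  rintro E ⟨A, hA, B, hB, rfl⟩ i j hij
  have lA : Low 0 A := fun i j h => deriv_lower hA i j (by omega)
  have lB : Low 0 B := fun i j h => deriv_lower hB i j (by omega)
  rw [LinearMap.sub_apply, Pi.sub_apply]
  rcases Nat.lt_or_ge (i : ℕ) (j : ℕ) with h | h
  · rw [low_comp lA lB i j (by omega), low_comp lB lA i j (by omega), sub_zero]
  · have : i = j := Fin.ext (by omega)
    subst this
    rw [diag_comp lA lB, diag_comp lB lA, mul_comm, sub_self]

lemma ds_step {k m : ℕ} (h : ∀ E ∈ ds k, Low m E) :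
    ∀ E ∈ ds (k + 1), Low (m + m) E := by
  rintro E ⟨A, hA, B, hB, rfl⟩
  exact low_sub (low_comp (h A hA) (h B hB)) (low_comp (h B hB) (h A hA))

theorem h10_derivations_lower_triangular_and_solvable :
    (∀ D : V6 →ₗ[ℝ] V6, IsDeriv D →
      ∀ j : Fin 6, D (e j) ∈ span ℝ {v : V6 | ∃ i : Fin 6, j ≤ i ∧ v = e i}) ∧
    (∃ n : ℕ, ∀ E ∈ ds n, E = 0) := by
  constructor
  · intro D hD j
    rw [pi_sum (D (e j))]
    refine Submodule.sum_mem _ fun k _ => ?_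
    by_cases hk : (k : ℕ) < (j : ℕ)
    · rw [deriv_lower hD k j hk, zero_smul]
      exact Submodule.zero_mem _
    · exact Submodule.smul_mem _ _
        (subset_span ⟨k, by rw [Fin.le_def]; omega, rfl⟩)
  · refine ⟨4, fun E hE => ?_⟩
    have h2 := ds_step ds1_low
    have h3 := ds_step h2
    have h4 := ds_step h3
    have hl := h4 E hE
    refine LinearMap.ext fun v => funext fun i => ?_
    simp only [LinearMap.zero_apply, Pi.zero_apply]
    rw [apply_eq_sum]
    refine Finset.sum_eq_zero fun k _ => ?_
    rw [hl i k (by have := i.isLt; omega), mul_zero]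
end

section
/- Let h10 = (0,0,0,12,13,14) with nonzero brackets [e1,e2]=e4, [e1,e3]=e5, [e1,e4]=e6, equipped with the inner product making e1,...,e6 orthonormal (corresponding to σ = identity, so s1 = 0, s3 = 0, satisfying s3 = s1 s4 / s2). Then the symmetry subspace s = { Y : ⟨[X,Y],Z⟩ + ⟨[X,Z],Y⟩ + ⟨[Y,Z],X⟩ = 0 for all X,Z } is one-dimensional, spanned by Y = e2 - e6, which does not lie in the center of h10. -/
open Submodule

/-- The inner product making e1, ..., e6 orthonormal. -/
def ip (x y : V6) : ℝ := ∑ i, x i * y i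

lemma cons_val_five (a b c d f g : ℝ) : ![a, b, c, d, f, g] 5 = g := rfl

theorem h10_symmetry_std :
    (∀ Y : V6,
      (∀ X Z : V6, ip (br X Y) Z + ip (br X Z) Y + ip (br Y Z) X = 0) ↔
      Y ∈ span ℝ {e 1 - e 5}) ∧
    ¬ (∀ z : V6, br (e 1 - e 5) z = 0) := by
  constructor
  · intro Y
    constructor
    · intro h
      have h0 := h (e 3) (e 1)
      have h2 := h (e 0) (e 4)
      have h3 := h (e 0) (e 5)
      have h4 := h (e 0) (e 2)
      have h5 := h (e 0) (e 3)
      simp [ip, br, e, Fin.sum_univ_six, Pi.single_apply] at h0 h2 h3 h4 h5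
      rw [mem_span_singleton]
      refine ⟨Y 1, ?_⟩
      funext i
      fin_cases i <;>
        simp [e, Pi.single_apply] <;> linarith
    · intro hY
      rw [mem_span_singleton] at hY
      obtain ⟨c, rfl⟩ := hY
      intro X Z
      simp [ip, br, e, Fin.sum_univ_six, Pi.single_apply, cons_val_five]
      ring
  · intro h
    have := congrFun (h (e 0)) 3
    simp [br, e, Pi.single_apply] at this
end

section
/- Let h10 = (0,0,0,12,13,14) and let g_r be the inner product with Gram matrix diag(1,1,1,r,r/2,r^2) in the standard basis, for r > 0. Then the Ricci operator of the corresponding left-invariant metric satisfies the nilsoliton equation Ric = c·Id + D for some real constant c and some derivation D of h10. -/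
open Submodule

/-- Diagonal entries of the Gram matrix diag(1,1,1,r,r/2,r^2). -/
noncomputable def gr (r : ℝ) : Fin 6 → ℝ := ![1, 1, 1, r, r / 2, r ^ 2]

/-- The inner product with Gram matrix diag(1,1,1,r,r/2,r^2). -/
noncomputable def gip (r : ℝ) (x y : V6) : ℝ := ∑ i, gr r i * x i * y i

/-- The g_r-orthonormal basis obtained by normalizing e1,...,e6. -/
noncomputable def onb (r : ℝ) (i : Fin 6) : V6 := (Real.sqrt (gr r i))⁻¹ • e i

/-- Structure coefficients with respect to the orthonormal basis. -/
noncomputable def c (r : ℝ) (i j k : Fin 6) : ℝ := gip r (br (onb r i) (onb r j)) (onb r k)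

@[simp] lemma cons_val_five' {α : Type*} {m : ℕ} (x : α) (u : Fin (m + 5) → α) :
    Matrix.vecCons x u 5 =
      Matrix.vecHead (Matrix.vecTail (Matrix.vecTail (Matrix.vecTail (Matrix.vecTail u)))) := rfl

/-- Table of structure coefficients. -/
noncomputable def ct (r : ℝ) (i j k : Fin 6) : ℝ :=
  if i = 0 ∧ j = 1 ∧ k = 3 then Real.sqrt r
  else if i = 1 ∧ j = 0 ∧ k = 3 then -Real.sqrt r
  else if i = 0 ∧ j = 2 ∧ k = 4 then Real.sqrt (r/2)
  else if i = 2 ∧ j = 0 ∧ k = 4 then -Real.sqrt (r/2)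
  else if i = 0 ∧ j = 3 ∧ k = 5 then Real.sqrt r
  else if i = 3 ∧ j = 0 ∧ k = 5 then -Real.sqrt r
  else 0

set_option maxHeartbeats 2000000 in
lemma c_eq (r : ℝ) (hr : 0 < r) (i j k : Fin 6) : c r i j k = ct r i j k := by
  have ha : Real.sqrt r * Real.sqrt r = r := Real.mul_self_sqrt hr.le
  have hb : Real.sqrt (r/2) * Real.sqrt (r/2) = r/2 := Real.mul_self_sqrt (by linarith)
  have h2 : Real.sqrt 2 * Real.sqrt 2 = 2 := Real.mul_self_sqrt (by norm_num)
  have ha0 : Real.sqrt r ≠ 0 := by positivity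
  have hb0 : Real.sqrt (r/2) ≠ 0 := by positivity
  fin_cases i <;> fin_cases j <;> fin_cases k <;>
    (try simp [c, ct, gip, br, onb, e, gr, Fin.sum_univ_six, Real.sqrt_sq hr.le]) <;>
    (try field_simp) <;> nlinarith [ha, hb, h2, hr.le]

/-- Diagonal linear map. -/
def diagMap (f : Fin 6 → ℝ) : V6 →ₗ[ℝ] V6 where
  toFun x := fun i => f i * x i
  map_add' x y := by funext i; simp [mul_add]
  map_smul' a x := by funext i; simp [smul_eq_mul]; ring

noncomputable def lam (r : ℝ) : Fin 6 → ℝ := ![-5*r/4, -r/2, -r/4, 0, r/4, r/2]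
noncomputable def dv (r : ℝ) : Fin 6 → ℝ := ![r/2, 5*r/4, 3*r/2, 7*r/4, 2*r, 9*r/4]

set_option maxHeartbeats 4000000 in
theorem h10_nilsoliton (r : ℝ) (hr : 0 < r) :
    ∃ (Ric : V6 →ₗ[ℝ] V6) (cc : ℝ) (D : V6 →ₗ[ℝ] V6),
      (∀ j h : Fin 6, gip r (Ric (onb r j)) (onb r h) =
        (1 / 2) * ∑ i, ∑ k,
          (c r i k i * (c r k j h + c r k h j) + (1 / 2) * c r i k h * c r i k j
            - c r i j k * c r k h i + c r i k i * c r j h k - c r i j k * c r i h k)) ∧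
      (∀ x y, D (br x y) = br (D x) y + br x (D y)) ∧
      Ric = cc • (LinearMap.id : V6 →ₗ[ℝ] V6) + D := by
  refine ⟨diagMap (lam r), -7*r/4, diagMap (dv r), ?_, ?_, ?_⟩
  · intro j h
    have ha : Real.sqrt r * Real.sqrt r = r := Real.mul_self_sqrt hr.le
    have hb : Real.sqrt (r/2) * Real.sqrt (r/2) = r/2 := Real.mul_self_sqrt (by linarith)
    have h2 : Real.sqrt 2 * Real.sqrt 2 = 2 := Real.mul_self_sqrt (by norm_num)
    have h4 : (Real.sqrt 2 * Real.sqrt 2) * (Real.sqrt 2 * Real.sqrt 2) = 4 := by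
      rw [h2]; norm_num
    have ha0 : Real.sqrt r ≠ 0 := by positivity
    have hb0 : Real.sqrt (r/2) ≠ 0 := by positivity
    simp only [c_eq r hr]
    fin_cases j <;> fin_cases h <;>
      (try simp [ct, diagMap, gip, onb, e, gr, lam, Fin.sum_univ_six, Real.sqrt_sq hr.le]) <;>
      (try field_simp) <;> (try norm_num) <;>
      nlinarith [ha, hb, h2, h4, hr, mul_pos hr hr, hr.le]
  · intro x y
    funext i
    fin_cases i <;> simp [diagMap, br, dv] <;> ring
  · apply LinearMap.ext
    intro v
    funext i
    fin_cases i <;> simp [diagMap, lam, dv] <;> ring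
end
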